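/- arXiv:1512.08090 — 3 statements merged into one kernel-verified Lean document; each statement's English description precedes it below -/
import Mathlib

section
/- The map (A,B,C) ↦ M(A,B,C) is a bijection from {(A,B,C) ∈ ℝ³ : B² − 4AC > 0} onto {g ∈ SL(2,ℝ) : tr g > 2}. Explicitly: (1) for every g = [[a,b],[c,d]] ∈ SL(2,ℝ) with a + d > 2 one has (d−a)² − 4·c·(−b) = (a+d)² − 4 > 0 and M(c, d−a, −b) = g; (2) for every (A,B,C) with B² − 4AC > 0, writing M(A,B,C) = [[a,b],[c,d]], one has (c, d−a, −b) = (A, B, C). -/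
/-!
The form attached to `g = [[a,b],[c,d]]` is `[c, d - a, -b]`; its discriminant is
`(tr g)² - 4 det g`, so for `det g = 1` the square root in `M` is `√((tr g)²) = tr g`, and the
entries of `M` return `g`. Conversely the entries `c`, `d - a`, `-b` of `M(A,B,C)` are
`A`, `B`, `C` outright, the two square roots cancelling in `d - a`.
-/

noncomputable section

/-- The matrix associated to an indefinite binary quadratic form `[A,B,C]`:
`M(A,B,C) = [[(−B+√(D+4))/2, −C], [A, (B+√(D+4))/2]]` where `D = B² − 4AC`. -/
def MQF (A B C : ℝ) : Matrix (Fin 2) (Fin 2) ℝ :=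
  !![(-B + Real.sqrt (B ^ 2 - 4 * A * C + 4)) / 2, -C;
     A, (B + Real.sqrt (B ^ 2 - 4 * A * C + 4)) / 2]

theorem discr_form_of_matrix (a b c d : ℝ) :
    (d - a) ^ 2 - 4 * c * (-b) = (a + d) ^ 2 - 4 * (a * d - b * c) := by
  ring

theorem sqrt_discr_add_four_of_det_eq_one {a b c d : ℝ} (hdet : a * d - b * c = 1)
    (htr : 0 ≤ a + d) : Real.sqrt ((d - a) ^ 2 - 4 * c * (-b) + 4) = a + d := by
  rw [discr_form_of_matrix, hdet, mul_one, sub_add_cancel, Real.sqrt_sq htr]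

theorem MQF_form_of_matrix {a b c d : ℝ} (hdet : a * d - b * c = 1) (htr : 0 ≤ a + d) :
    MQF c (d - a) (-b) = !![a, b; c, d] := by
  rw [MQF, sqrt_discr_add_four_of_det_eq_one hdet htr]
  ext i j
  fin_cases i <;> fin_cases j <;> simp
  all_goals ring

theorem MQF_one_zero (A B C : ℝ) : MQF A B C 1 0 = A := rfl

theorem MQF_one_one_sub_MQF_zero_zero (A B C : ℝ) : MQF A B C 1 1 - MQF A B C 0 0 = B := by
  simp only [MQF, Matrix.of_apply, Matrix.cons_val', Matrix.cons_val_zero, Matrix.cons_val_one,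
    Matrix.empty_val', Matrix.cons_val_fin_one]
  ring

theorem neg_MQF_zero_one (A B C : ℝ) : -(MQF A B C 0 1) = C := by
  simp [MQF]

/-- `(A,B,C) ↦ M(A,B,C)` is a bijection from the indefinite forms onto
`{g ∈ SL(2,ℝ) : tr g > 2}`: (1) for `g = [[a,b],[c,d]]` with `ad − bc = 1` and `a + d > 2`,
the form `(c, d−a, −b)` has discriminant `(a+d)² − 4 > 0` and `M(c, d−a, −b) = g`;
(2) for every `(A,B,C)` with `B² − 4AC > 0`, writing `M(A,B,C) = [[a,b],[c,d]]`,
one has `(c, d−a, −b) = (A, B, C)`. -/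
theorem stmt_1 :
    (∀ a b c d : ℝ, a * d - b * c = 1 → a + d > 2 →
      (d - a) ^ 2 - 4 * c * (-b) = (a + d) ^ 2 - 4 ∧
      (a + d) ^ 2 - 4 > 0 ∧
      MQF c (d - a) (-b) = !![a, b; c, d]) ∧
    (∀ A B C : ℝ, B ^ 2 - 4 * A * C > 0 →
      MQF A B C 1 0 = A ∧
      MQF A B C 1 1 - MQF A B C 0 0 = B ∧
      -(MQF A B C 0 1) = C) := by
  refine ⟨fun a b c d hdet htr => ⟨?_, ?_, MQF_form_of_matrix hdet (by linarith)⟩,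
    fun A B C _ => ⟨MQF_one_zero A B C, MQF_one_one_sub_MQF_zero_zero A B C, neg_MQF_zero_one A B C⟩⟩
  · rw [discr_form_of_matrix, hdet, mul_one]
  · nlinarith
end
end

section
/- Let g = [[α,β],[γ,δ]] ∈ SL(2,ℝ) and let f = [A,B,C] be an indefinite binary quadratic form. Define g·f := [Aδ² − Bγδ + Cγ², −2Aβδ + B(αδ+βγ) − 2Cαγ, Aβ² − Bαβ + Cα²]. Then g·f has the same discriminant as f (in particular g·f is indefinite), and M(g·f) = g · M(A,B,C) · g⁻¹ in SL(2,ℝ). -/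
/-!
Identify the form `[A,B,C]` with the traceless matrix `N = [[-B, -2C], [2A, B]]`, whose
determinant is minus the discriminant. The substitution `f ↦ g·f` is exactly conjugation
`N ↦ g N g⁻¹`, so the discriminant is preserved because the determinant is. Since
`M(A,B,C) = (√(D+4) · 1 + N) / 2` and the scalar part only depends on `D`, conjugating `M(f)`
by `g` gives `M(g·f)`.
-/

noncomputable section

abbrev SL2 := Matrix.SpecialLinearGroup (Fin 2) ℝ

open Matrix

section CommRing

variable {R : Type*} [CommRing R]

def binaryFormMatrix (A B C : R) : Matrix (Fin 2) (Fin 2) R :=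
  !![-B, -2 * C; 2 * A, B]

theorem det_binaryFormMatrix (A B C : R) :
    (binaryFormMatrix A B C).det = -discrim A B C := by
  rw [binaryFormMatrix, det_fin_two_of, discrim]
  ring

theorem mul_binaryFormMatrix_mul_adjugate (g : Matrix (Fin 2) (Fin 2) R) (A B C : R) :
    g * binaryFormMatrix A B C * adjugate g =
      binaryFormMatrix (A * g 1 1 ^ 2 - B * g 1 0 * g 1 1 + C * g 1 0 ^ 2)
        (-2 * A * g 0 1 * g 1 1 + B * (g 0 0 * g 1 1 + g 0 1 * g 1 0) - 2 * C * g 0 0 * g 1 0)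
        (A * g 0 1 ^ 2 - B * g 0 0 * g 0 1 + C * g 0 0 ^ 2) := by
  conv_lhs => rw [eta_fin_two g]
  rw [adjugate_fin_two_of, binaryFormMatrix, binaryFormMatrix, mul_fin_two, mul_fin_two]
  ring_nf

end CommRing

theorem MQF_eq_smul (A B C : ℝ) :
    MQF A B C = (2 : ℝ)⁻¹ • (√(discrim A B C + 4) • 1 + binaryFormMatrix A B C) := by
  rw [MQF, binaryFormMatrix, one_fin_two, smul_of, of_add_of, smul_of, discrim]
  simp only [smul_cons, smul_eq_mul, smul_empty, cons_add_cons, empty_add_empty]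
  ring_nf

theorem stmt_2_general (g : SL2) (A B C A' B' C' : ℝ)
    (hA' : A' = A * (g.1 1 1) ^ 2 - B * (g.1 1 0) * (g.1 1 1) + C * (g.1 1 0) ^ 2)
    (hB' : B' = -2 * A * (g.1 0 1) * (g.1 1 1)
        + B * ((g.1 0 0) * (g.1 1 1) + (g.1 0 1) * (g.1 1 0))
        - 2 * C * (g.1 0 0) * (g.1 1 0))
    (hC' : C' = A * (g.1 0 1) ^ 2 - B * (g.1 0 0) * (g.1 0 1) + C * (g.1 0 0) ^ 2) :
    B' ^ 2 - 4 * A' * C' = B ^ 2 - 4 * A * C ∧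
    MQF A' B' C' = g.1 * MQF A B C * (g⁻¹).1 := by
  have hinv : (g⁻¹).1 = adjugate g.1 := Matrix.SpecialLinearGroup.coe_inv g
  have hconj : g.1 * binaryFormMatrix A B C * (g⁻¹).1 = binaryFormMatrix A' B' C' := by
    rw [hinv, mul_binaryFormMatrix_mul_adjugate, hA', hB', hC']
  have hdisc : discrim A' B' C' = discrim A B C := by
    have hdet := congrArg det hconj
    rw [det_mul, det_mul, hinv, det_adjugate, g.2, det_binaryFormMatrix,
      det_binaryFormMatrix] at hdet
    simpa using hdet.symm
  refine ⟨by simpa only [discrim] using hdisc, ?_⟩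
  have hmul : g.1 * (g⁻¹).1 = 1 := congrArg Subtype.val (mul_inv_cancel g)
  rw [MQF_eq_smul, MQF_eq_smul, hdisc, ← hconj]
  simp only [mul_smul_comm, smul_mul_assoc, mul_add, add_mul, mul_one, hmul]

/-- for `g = [[α,β],[γ,δ]] ∈ SL(2,ℝ)` and an indefinite form `f = [A,B,C]`,
the form `g·f = [Aδ² − Bγδ + Cγ², −2Aβδ + B(αδ+βγ) − 2Cαγ, Aβ² − Bαβ + Cα²]`
has the same discriminant as `f`, and `M(g·f) = g · M(A,B,C) · g⁻¹` in `SL(2,ℝ)`. -/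
theorem stmt_2 (g : SL2) (A B C A' B' C' : ℝ) (hD : B ^ 2 - 4 * A * C > 0)
    (hA' : A' = A * (g.1 1 1) ^ 2 - B * (g.1 1 0) * (g.1 1 1) + C * (g.1 1 0) ^ 2)
    (hB' : B' = -2 * A * (g.1 0 1) * (g.1 1 1)
        + B * ((g.1 0 0) * (g.1 1 1) + (g.1 0 1) * (g.1 1 0))
        - 2 * C * (g.1 0 0) * (g.1 1 0))
    (hC' : C' = A * (g.1 0 1) ^ 2 - B * (g.1 0 0) * (g.1 0 1) + C * (g.1 0 0) ^ 2) :
    B' ^ 2 - 4 * A' * C' = B ^ 2 - 4 * A * C ∧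
    MQF A' B' C' = g.1 * MQF A B C * (g⁻¹).1 :=
  stmt_2_general g A B C A' B' C' hA' hB' hC'
end
end

section
/- Let f = [A,B,C] be an indefinite binary quadratic form with A ≠ 0 and discriminant D = B² − 4AC > 0. Set x₊ = (−B+√D)/(2A), x₋ = (−B−√D)/(2A), λ₊ = (√(D+4)+√D)/2 and λ₋ = (√(D+4)−√D)/2. Then M(A,B,C)·(x₊, 1)ᵀ = λ₊·(x₊, 1)ᵀ and M(A,B,C)·(x₋, 1)ᵀ = λ₋·(x₋, 1)ᵀ; that is, the zeros x₊ and x₋ of f are the attracting and repelling fixed points of the associated matrix M(A,B,C). -/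
/-!
If `x` is a zero of `A x² + B x + C`, then `(x, 1)` is an eigenvector of
`[[(−B+s)/2, −C], [A, (B+s)/2]]` for every `s`, with eigenvalue `A x + (B+s)/2`: the second
coordinate is immediate, and the first one reduces to `A x² + B x + C = 0`.
At the zeros `x± = (−B ± √D)/(2A)` one has `A x± = (−B ± √D)/2`, so with `s = √(D+4)`
the eigenvalue is `(√(D+4) ± √D)/2`.
-/

noncomputable section

theorem Matrix.mulVec_vecCons_one_eq_smul_of_quadratic_eq_zero {K : Type*} [Field K]
    [NeZero (2 : K)] {A B C x : K} (s : K) (hx : A * (x * x) + B * x + C = 0) :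
    (!![(-B + s) / 2, -C; A, (B + s) / 2]).mulVec ![x, 1] = (A * x + (B + s) / 2) • ![x, 1] := by
  ext i
  fin_cases i
  · simp only [Fin.zero_eta, Fin.isValue, Matrix.mulVec_cons, Matrix.mulVec_empty, one_smul,
      add_zero, Pi.add_apply, Pi.smul_apply, Function.comp_apply, Matrix.cons_val_zero,
      Matrix.head_cons, Matrix.tail_cons, smul_eq_mul]
    field_simp
    linear_combination -2 * hx
  · simp [mul_comm]

theorem MQF_mulVec_eq_smul_of_quadratic_eq_zero {A B C x : ℝ}
    (hx : A * (x * x) + B * x + C = 0) :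
    (MQF A B C).mulVec ![x, 1] =
      (A * x + (B + Real.sqrt (B ^ 2 - 4 * A * C + 4)) / 2) • ![x, 1] :=
  Matrix.mulVec_vecCons_one_eq_smul_of_quadratic_eq_zero _ hx

/-- for an indefinite form `[A,B,C]` with `A ≠ 0` and `D = B² − 4AC > 0`,
the zeros `x₊ = (−B+√D)/(2A)`, `x₋ = (−B−√D)/(2A)` of `f` give eigenvectors of
`M(A,B,C)` with eigenvalues `λ₊ = (√(D+4)+√D)/2` and `λ₋ = (√(D+4)−√D)/2`. -/
theorem stmt_3 (A B C : ℝ) (hA : A ≠ 0) (hD : B ^ 2 - 4 * A * C > 0) :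
    (MQF A B C).mulVec
        ![(-B + Real.sqrt (B ^ 2 - 4 * A * C)) / (2 * A), 1] =
      ((Real.sqrt (B ^ 2 - 4 * A * C + 4) + Real.sqrt (B ^ 2 - 4 * A * C)) / 2) •
        ![(-B + Real.sqrt (B ^ 2 - 4 * A * C)) / (2 * A), 1] ∧
    (MQF A B C).mulVec
        ![(-B - Real.sqrt (B ^ 2 - 4 * A * C)) / (2 * A), 1] =
      ((Real.sqrt (B ^ 2 - 4 * A * C + 4) - Real.sqrt (B ^ 2 - 4 * A * C)) / 2) •
        ![(-B - Real.sqrt (B ^ 2 - 4 * A * C)) / (2 * A), 1] := by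
  set d := Real.sqrt (B ^ 2 - 4 * A * C)
  have hdiscrim : discrim A B C = d * d := by
    rw [discrim, Real.mul_self_sqrt hD.le]
  have hroot := quadratic_eq_zero_iff hA hdiscrim
  constructor
  · rw [MQF_mulVec_eq_smul_of_quadratic_eq_zero ((hroot _).mpr (.inl rfl))]
    congr 1
    field_simp
    ring
  · rw [MQF_mulVec_eq_smul_of_quadratic_eq_zero ((hroot _).mpr (.inr rfl))]
    congr 1
    field_simp
    ring
end
end
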